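/- Collapse at order 1: suppose the sequence G^0, G^1, … (with associated identifier sets G̃^0, G̃^1, …) satisfies G̃^i ≃ G̃^{i_1} for all i ≥ i_1. Define Ĝ^{i_1} = G^{i_1} and Ĝ^{i+1} = T_{G̃^{i_1}[i_1/i_1−1]}(Ĝ^i), so the state-set of Ĝ^i remains constant. Then there exists i_0 such that the following are equivalent for every word w: (1) the run g^{i_1}_{(q,Q′)} —w→ Q_1 with Q_1 ⊆ Q_f exists in Ĝ^i for some i; (2) the run g^{i_1}_{(q,Q′)} —w→ Q_2 with Q_2 ⊆ Q_f exists in Ĝ^{i_0}; (3) the run g^{i′}_{(q,Q′)} —w→ Q_3 with Q_3 ⊆ Q_f exists in G^{i′} for some i′. -/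

import Mathlib

namespace Order2

/-! Order-2 APDSs, 2-store multi-automata (in pooled form) and the
backwards-reachability saturation construction of Hague–Ong. -/

/-- 1-stores -/
abbrev Store1 (α : Type) := List α

/-- 2-stores: the topmost 1-store together with the rest (hence nonempty) -/
abbrev Store2 (α : Type) := List α × List (List α)

/-- the operations of `O_2` -/
inductive Op2 (α : Type) where
  | pushw : List α → Op2 α
  | push2 : Op2 α
  | pop2 : Op2 α

/-- partial application of an operation to a 2-store -/
def Op2.apply {α : Type} : Op2 α → Store2 α → Option (Store2 α)
  | .pushw w, s =>
      match s.1 with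
      | [] => none
      | _ :: t => some (w ++ t, s.2)
  | .push2, s => some (s.1, s.1 :: s.2)
  | .pop2, s =>
      match s.2 with
      | [] => none
      | r :: rs => some (r, rs)

def top1 {α : Type} (s : Store2 α) : Option α := s.1.head?

/-- configurations; `none` is the undefined store `∇` -/
abbrev Conf (P α : Type) := P × Option (Store2 α)

/-- commands of an order-2 APDS -/
abbrev Cmds (P α : Type) := Set (P × α × Set (Op2 α × P))

/-- `⟨p,γ⟩ ↪ C` -/
def ConfStep {P α : Type} (D : Cmds P α) (c : Conf P α) (C : Set (Conf P α)) : Prop :=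
  ∃ p γ a OP, c = (p, some γ) ∧ (p, a, OP) ∈ D ∧ top1 γ = some a ∧
    C = {c' | ∃ o p' δ, (o, p') ∈ OP ∧ Op2.apply o γ = some δ ∧ c' = (p', some δ)}
      ∪ {c' | (∃ o p', (o, p') ∈ OP ∧ Op2.apply o γ = none) ∧ c' = (p, none)}

/-- `↪` extended to sets of configurations -/
def SetStep {P α : Type} (D : Cmds P α) (X Y : Set (Conf P α)) : Prop :=
  ∃ c C C', ConfStep D c C ∧ c ∉ C' ∧ X = insert c C' ∧ Y = C' ∪ C

/-- `Pre*(C_Init)` -/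
def PreStar {P α : Type} (D : Cmds P α) (CI : Set (Conf P α)) : Set (Conf P α) :=
  {c | ∃ C, Relation.ReflTransGen (SetStep D) {c} C ∧ C ⊆ CI}

/-- identifiers `G̃_{(q₁,Q₂)}` of the new order-2 transitions -/
abbrev Ident (Q : Type) := Q × Set Q

/-- the pool of order-1 states: the states `σB` of the disjoint union of the automata of
`B` (the 1-store automata of `A_0` together with the `B^a_1`), plus one state
`g^i_{(q₁,Q₂)}` for every stage `i` and identifier -/
abbrev GQ (σB Q : Type) := σB ⊕ (ℕ × Ident Q)

/-- the elements `α_t` of the element sets: a reference `θ` to an automaton of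
`B ∪ G̃^{i-1}` (given by its initial state in the pool), or a triple `(a, push_w, θ)` -/
inductive Elem (α σB Q : Type) where
  | ref : GQ σB Q → Elem α σB Q
  | push : α → List α → GQ σB Q → Elem α σB Q

/-- order-1 (pool) transition relations -/
abbrev Trans1 (α σB Q : Type) := Set (GQ σB Q × α × Set (GQ σB Q))
/-- order-2 transition relations (labels are initial states in the pool) -/
abbrev Trans2 (α σB Q : Type) := Set (Q × GQ σB Q × Set Q)

/-- one alternating step of the order-1 (pool) automaton -/
def wstep {α σB Q : Type} (Δ : Trans1 α σB Q) (a : α) (S S' : Set (GQ σB Q)) : Prop :=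
  ∃ f : GQ σB Q → Set (GQ σB Q),
    (∀ g ∈ S, (g, a, f g) ∈ Δ) ∧ S' = ⋃ g ∈ S, f g

/-- alternating run of the order-1 automaton over a 1-store -/
inductive wrun {α σB Q : Type} (Δ : Trans1 α σB Q) :
    Store1 α → Set (GQ σB Q) → Set (GQ σB Q) → Prop
  | nil (S : Set (GQ σB Q)) : wrun Δ [] S S
  | cons {a : α} {w : Store1 α} {S S1 S2 : Set (GQ σB Q)} :
      wstep Δ a S S1 → wrun Δ w S1 S2 → wrun Δ (a :: w) S S2

/-- acceptance of a 1-store from the pool state `g`, w.r.t. final states `F` -/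
def Acc1 {α σB Q : Type} (Δ : Trans1 α σB Q) (F : Set (GQ σB Q)) (g : GQ σB Q)
    (w : Store1 α) : Prop :=
  ∃ S, wrun Δ w {g} S ∧ S ⊆ F

/-- one alternating order-2 step reading the 1-store `γ` (each label must accept `γ`) -/
def step2 {α σB Q : Type} (Δ1 : Trans1 α σB Q) (F1 : Set (GQ σB Q)) (Δ2 : Trans2 α σB Q)
    (γ : Store1 α) (S S' : Set Q) : Prop :=
  ∃ f : Q → GQ σB Q × Set Q,
    (∀ q ∈ S, (q, f q) ∈ Δ2 ∧ Acc1 Δ1 F1 (f q).1 γ) ∧ S' = ⋃ q ∈ S, (f q).2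

/-- alternating order-2 run over a word of 1-stores -/
inductive run2 {α σB Q : Type} (Δ1 : Trans1 α σB Q) (F1 : Set (GQ σB Q))
    (Δ2 : Trans2 α σB Q) : List (Store1 α) → Set Q → Set Q → Prop
  | nil (S : Set Q) : run2 Δ1 F1 Δ2 [] S S
  | cons {γ : Store1 α} {w : List (Store1 α)} {S S1 S2 : Set Q} :
      step2 Δ1 F1 Δ2 γ S S1 → run2 Δ1 F1 Δ2 w S1 S2 → run2 Δ1 F1 Δ2 (γ :: w) S S2

/-- one order-2 step recording only the set `θ̃` of labels used -/
def lstep {α σB Q : Type} (Δ2 : Trans2 α σB Q) (S : Set Q) (θ : Set (GQ σB Q))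
    (S' : Set Q) : Prop :=
  ∃ f : Q → GQ σB Q × Set Q,
    (∀ q ∈ S, (q, f q) ∈ Δ2) ∧ θ = (fun q => (f q).1) '' S ∧ S' = ⋃ q ∈ S, (f q).2

/-- The fixed data of the construction: an order-2 APDS `D` over control states `P`, and
the 2-store multi-automaton `A_0` presented in pooled form:  order-2 states `Q` with
initial states `qinit p`, final states `F2`, the distinguished states `q*_f` (`qfstar`)
and `q^ε_f` (`qfeps`), `∇`-transitions `nabla`;  order-2 transitions `Δ2B` labelled by
(the initial states of) 1-store automata whose disjoint union (together with the `B^a_1`,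
with initial states `ba a`) is the order-1 automaton `G^0 = (Δ1B, F1B)` over states `σB`. -/
structure Setup (α P Q σB : Type) where
  D : Cmds P α
  qinit : P → Q
  F2 : Set Q
  qfstar : Q
  qfeps : Q
  nabla : Set Q
  Δ2B : Set (Q × σB × Set Q)
  Δ1B : Set (σB × α × Set σB)
  F1B : Set σB
  ba : α → σB

/-- the base order-1 transitions, lifted to the pool -/
def liftB {α σB Q : Type} (Δ : Set (σB × α × Set σB)) : Trans1 α σB Q :=
  {t | ∃ s a T, (s, a, T) ∈ Δ ∧ t = (Sum.inl s, a, Sum.inl '' T)}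

/-- the (fixed) set of final order-1 states -/
def F1 {α P Q σB : Type} (su : Setup α P Q σB) : Set (GQ σB Q) :=
  Sum.inl '' su.F1B

/-- the data of stage `i` of the construction: the set `gdom` of identifiers present in
`A_i`, the recipes `G̃^i` (`recipes`), and the order-1 pool automaton `G^i` (`Δ1`) -/
structure Stage (α σB Q : Type) where
  gdom : Set (Ident Q)
  recipes : Ident Q → Set (Set (Elem α σB Q))
  Δ1 : Trans1 α σB Q

/-- the order-2 transitions of `A_i`: the `B`-labelled transitions of `A_0` plus one
transition `q₁ —G^i_{(q₁,Q₂)}→ Q₂` for each identifier present -/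
def Δ2At {α P Q σB : Type} (su : Setup α P Q σB) (i : ℕ) (dom : Set (Ident Q)) :
    Trans2 α σB Q :=
  {t | ∃ q s T, (q, s, T) ∈ su.Δ2B ∧ t = (q, Sum.inl s, T)} ∪
  {t | ∃ id ∈ dom, t = (id.1, Sum.inr (i, id), id.2)}

/-- the clause of condition (2) for a single pair `(o, p^{k_t})` of a command with top
symbol `a` and source control state `p` -/
def Clause {α P Q σB : Type} (su : Setup α P Q σB) (i : ℕ) (st : Stage α σB Q)
    (a : α) (p : P) (op : Op2 α × P) (Qt : Set Q) (Selt : Set (Elem α σB Q)) : Prop :=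
  match op.1 with
  | .push2 =>
      ∃ θ1 θ2 Q', lstep (Δ2At su i st.gdom) {su.qinit op.2} θ1 Q' ∧
        lstep (Δ2At su i st.gdom) Q' θ2 Qt ∧
        Selt = insert (Elem.ref (Sum.inl (su.ba a))) (Elem.ref '' θ1 ∪ Elem.ref '' θ2)
  | .pop2 =>
      Selt = {Elem.ref (Sum.inl (su.ba a))} ∧
        (Qt = {su.qinit op.2} ∨ (su.qinit p ∈ su.nabla ∧ Qt = {su.qfeps}))
  | .pushw w =>
      ∃ θ T, (su.qinit op.2, θ, T) ∈ Δ2At su i st.gdom ∧ Qt = T ∧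
        Selt = {Elem.push a w θ}

/-- condition (2): the element sets `S = S₁ ∪ … ∪ S_m` contributed to the identifier
`G̃^{i+1}_{(q,Qs)}` by the commands of the APDS, given the runs of `A_i` -/
def NewRec {α P Q σB : Type} (su : Setup α P Q σB) (i : ℕ) (st : Stage α σB Q)
    (q : Q) (Qs : Set Q) : Set (Set (Elem α σB Q)) :=
  {S | ∃ p a OP, (p, a, OP) ∈ su.D ∧ q = su.qinit p ∧
        ∃ f : Op2 α × P → Set Q × Set (Elem α σB Q),
          (∀ op ∈ OP, Clause su i st a p op (f op).1 (f op).2) ∧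
          Qs = ⋃ op ∈ OP, (f op).1 ∧ S = ⋃ op ∈ OP, (f op).2}

/-- the identifiers of `A_{i+1}`: those already present in `A_i` together with those
introduced by condition (2) -/
def NewDom {α P Q σB : Type} (su : Setup α P Q σB) (i : ℕ) (st : Stage α σB Q) :
    Set (Ident Q) :=
  st.gdom ∪ {id | ∃ S, S ∈ NewRec su i st id.1 id.2}

/-- the requirement on an element `α_t` in the definition of `T_{G̃}`: for a reference
`θ`, a transition of `G^i`; for `(a, push_w, θ)`, the letter must be `a` and `G^i` must
have a run over `w` from `q^θ` -/
def ElemClause {α σB Q : Type} (Δ1 : Trans1 α σB Q) (b : α) :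
    Elem α σB Q → Set (GQ σB Q) → Prop
  | .ref θ, T => (θ, b, T) ∈ Δ1
  | .push a w θ, T => b = a ∧ wrun Δ1 w {θ} T

/-- `T_{G̃^j}` : the update of the order-1 pool automaton.  The state `g^j_{(q₁,Q₂)}`
inherits the transitions of `g^{j-1}_{(q₁,Q₂)}`, and receives a new transition
`g^j_{(q₁,Q₂)} —b→ Q₁ ∪ … ∪ Q_r` for every element set `S = {α₁,…,α_r}` of the recipe,
with the `Q_t` given by `ElemClause`; all previous transitions are kept. -/
def TG {α σB Q : Type} (j : ℕ) (dom : Set (Ident Q))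
    (R : Ident Q → Set (Set (Elem α σB Q))) (Δ1 : Trans1 α σB Q) : Trans1 α σB Q :=
  Δ1 ∪
  {t | ∃ id ∈ dom, ∃ a T, (Sum.inr (j - 1, id), a, T) ∈ Δ1 ∧
        t = (Sum.inr (j, id), a, T)} ∪
  {t | ∃ id ∈ dom, ∃ (b : α) (S : Set (Elem α σB Q)) (f : Elem α σB Q → Set (GQ σB Q)),
        S ∈ R id ∧ (∀ e ∈ S, ElemClause Δ1 b e (f e)) ∧
        t = (Sum.inr (j, id), b, ⋃ e ∈ S, f e)}

/-- `T_D` : one step of the saturation, producing the data of `A_{i+1}` from `A_i` -/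
def TD {α P Q σB : Type} (su : Setup α P Q σB) (i : ℕ) (st : Stage α σB Q) :
    Stage α σB Q :=
  { gdom := NewDom su i st
    recipes := fun id => NewRec su i st id.1 id.2
    Δ1 := TG (i + 1) (NewDom su i st) (fun id => NewRec su i st id.1 id.2) st.Δ1 }

/-- the sequence of stages: `A_0` (no identifiers, `G^0` the disjoint union of `B`),
then `A_{i+1} = T_D(A_i)` -/
def stage {α P Q σB : Type} (su : Setup α P Q σB) : ℕ → Stage α σB Q
  | 0 => ⟨∅, fun _ => ∅, liftB su.Δ1B⟩
  | i + 1 => TD su i (stage su i)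

/-- acceptance of a 2-store from the order-2 state `q` in `A_i` -/
def Acc2 {α P Q σB : Type} (su : Setup α P Q σB) (i : ℕ) (q : Q) (s : Store2 α) : Prop :=
  ∃ S, run2 (stage su i).Δ1 (F1 su) (Δ2At su i (stage su i).gdom) (s.1 :: s.2) {q} S ∧
    S ⊆ su.F2

/-- `L(A_i)` as a set of configurations (with `⟨p,∇⟩ ∈ L(A_i)` iff `q^p —∇→ {q^ε_f}`) -/
def LangA {α P Q σB : Type} (su : Setup α P Q σB) (i : ℕ) : Set (Conf P α) :=
  {c | (∃ s, c.2 = some s ∧ Acc2 su i (su.qinit c.1) s) ∨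
       (c.2 = none ∧ su.qinit c.1 ∈ su.nabla)}

/-- well-formedness of `A_0`: `q^ε_f` is final with no outgoing transitions, the initial
states are pairwise distinct, non-final, with no incoming transitions; all 2-stores are
accepted from `q*_f`; and `B^a_1` (with initial state `ba a`) accepts exactly the
1-stores with `top₁ = a` -/
def Setup.WF {α P Q σB : Type} (su : Setup α P Q σB) : Prop :=
  su.qfeps ∈ su.F2 ∧
  (∀ x T, (su.qfeps, x, T) ∉ su.Δ2B) ∧
  Function.Injective su.qinit ∧
  (∀ p, su.qinit p ∉ su.F2) ∧
  (∀ p, su.qinit p ≠ su.qfeps) ∧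
  (∀ q x T p, (q, x, T) ∈ su.Δ2B → su.qinit p ∉ T) ∧
  (∀ s : Store2 α, Acc2 su 0 su.qfstar s) ∧
  (∀ (a : α) (w : Store1 α),
      Acc1 (liftB su.Δ1B) (F1 su) (Sum.inl (su.ba a)) w ↔ w.head? = some a)

/-- the substitution `[j/i]` on pool states: replace the identifier superscript `i`
by `j` -/
def substGQ {σB Q : Type} (j i : ℕ) : GQ σB Q → GQ σB Q
  | .inl s => .inl s
  | .inr (i', id) => .inr (if i' = i then j else i', id)

/-- `[j/i]` on elements -/
def substElem {α σB Q : Type} (j i : ℕ) : Elem α σB Q → Elem α σB Q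
  | .ref θ => .ref (substGQ j i θ)
  | .push a w θ => .push a w (substGQ j i θ)

/-- `[j/i]` on element sets -/
def substS {α σB Q : Type} (j i : ℕ) (S : Set (Elem α σB Q)) : Set (Elem α σB Q) :=
  substElem j i '' S

/-- `G̃^i ≃ G̃^{i₁}` : the two stages have identifiers for exactly the same pairs, and
corresponding recipes agree up to the index substitution (`≲` in both directions) -/
def SimeqAt {α P Q σB : Type} (su : Setup α P Q σB) (i1 i : ℕ) : Prop :=
  (stage su i).gdom = (stage su i1).gdom ∧
  ∀ id ∈ (stage su i).gdom,
    (∀ S ∈ (stage su i).recipes id, substS (i1 - 1) (i - 1) S ∈ (stage su i1).recipes id) ∧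
    (∀ S ∈ (stage su i1).recipes id, substS (i - 1) (i1 - 1) S ∈ (stage su i).recipes id)

/-- the fixed-state sequence `Ĝ^{i₁}, Ĝ^{i₁+1}, …` (indexed here by the offset from
`i₁`): `Ĝ^{i₁} = G^{i₁}` and `Ĝ^{i+1} = T_{G̃^{i₁}[i₁/i₁-1]}(Ĝ^i)`, so that no new
states are added -/
def hatSeq {α P Q σB : Type} (su : Setup α P Q σB) (i1 : ℕ) : ℕ → Trans1 α σB Q
  | 0 => (stage su i1).Δ1
  | m + 1 =>
      TG i1 (stage su i1).gdom
        (fun id => substS i1 (i1 - 1) '' (stage su i1).recipes id)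
        (hatSeq su i1 m)

end Order2

/-!
The automata `Ĝ^m` only grow and only use the finitely many transitions between states of
level at most `i1 + 1`, so they stabilise at some `m0`: this is (1) ⇔ (2).

Collapsing every `g^k_id` with `k ≥ i1` onto `ĝ_id = g^{i1}_id` maps `G^{i1+m}` into `Ĝ^m`,
because `≲` turns each recipe of `G̃^{i1+m+1}` into one of `G̃^{i1}[i1/i1-1]`; after lifting an
accepting run of `g^{i'}` to `g^{i1+i'}`, this gives (3) ⇒ (1).

Conversely, by `≳` every transition of `ĝ_id` in `Ĝ^m` is imitated by `g^k_id` for all large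
`k`, with targets `g^{k'}_id'` standing for `ĝ_id'`. Runs are finite and branch over finitely
many identifiers, so an accepting run of `Ĝ^m` from `ĝ_id` is imitated in `G^∞ = ⋃ G^k` from
`g^k_id` for `k` large; such a run stays inside `G^k`, which gives (2) ⇒ (3).
-/

namespace Order2

open Filter

section Runs

variable {α σB Q : Type}

lemma wrun_mono {Δ Δ' : Trans1 α σB Q} (hΔ : Δ ⊆ Δ') {w : Store1 α} {S T : Set (GQ σB Q)}
    (h : wrun Δ w S T) : wrun Δ' w S T := by
  induction h with
  | nil S => exact .nil S
  | cons hs _ ih =>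
    obtain ⟨f, hf, rfl⟩ := hs
    exact .cons ⟨f, fun g hg => hΔ (hf g hg), rfl⟩ ih

lemma Acc1.mono {Δ Δ' : Trans1 α σB Q} {F : Set (GQ σB Q)} {g : GQ σB Q} {w : Store1 α}
    (h : Acc1 Δ F g w) (hΔ : Δ ⊆ Δ') : Acc1 Δ' F g w :=
  let ⟨S, hr, hS⟩ := h
  ⟨S, wrun_mono hΔ hr, hS⟩

lemma wstep_singleton_iff {Δ : Trans1 α σB Q} {a : α} {g : GQ σB Q} {T : Set (GQ σB Q)} :
    wstep Δ a {g} T ↔ (g, a, T) ∈ Δ := by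
  constructor
  · rintro ⟨f, hf, rfl⟩
    simpa using hf g rfl
  · intro h
    exact ⟨fun _ => T, by simpa using h, by simp⟩

lemma wrun_cons_singleton_iff {Δ : Trans1 α σB Q} {a : α} {w : Store1 α} {g : GQ σB Q}
    {T : Set (GQ σB Q)} : wrun Δ (a :: w) {g} T ↔ ∃ T₁, (g, a, T₁) ∈ Δ ∧ wrun Δ w T₁ T := by
  constructor
  · rintro (_ | ⟨hs, hr⟩)
    exact ⟨_, wstep_singleton_iff.1 hs, hr⟩
  · rintro ⟨T₁, h, hr⟩
    exact .cons (wstep_singleton_iff.2 h) hr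

lemma wrun_singleton_iff {Δ : Trans1 α σB Q} {a : α} {g : GQ σB Q} {T : Set (GQ σB Q)} :
    wrun Δ [a] {g} T ↔ (g, a, T) ∈ Δ := by
  rw [wrun_cons_singleton_iff]
  constructor
  · rintro ⟨T₁, h, (_ | _)⟩
    exact h
  · exact fun h => ⟨T, h, .nil T⟩

lemma wrun_of_closed {Δ Δ' : Trans1 α σB Q} {W : Set (GQ σB Q)}
    (hΔ : ∀ g a T, (g, a, T) ∈ Δ → g ∈ W → (g, a, T) ∈ Δ' ∧ T ⊆ W)
    {w : Store1 α} {S T : Set (GQ σB Q)} (h : wrun Δ w S T) :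
    S ⊆ W → wrun Δ' w S T ∧ T ⊆ W := by
  induction h with
  | nil S => exact fun hS => ⟨.nil S, hS⟩
  | cons hs _ ih =>
    intro hS
    obtain ⟨f, hf, rfl⟩ := hs
    have hstep := fun g hg => hΔ _ _ _ (hf g hg) (hS hg)
    obtain ⟨hr, hT⟩ := ih (Set.iUnion₂_subset fun g hg => (hstep g hg).2)
    exact ⟨.cons ⟨f, fun g hg => (hstep g hg).1, rfl⟩ hr, hT⟩

def IsSimulation (φ : GQ σB Q → GQ σB Q) (Δ Δ' : Trans1 α σB Q) : Prop :=
  ∀ g a T, (g, a, T) ∈ Δ → ∃ T' ⊆ φ '' T, (φ g, a, T') ∈ Δ'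

lemma IsSimulation.wrun {φ : GQ σB Q → GQ σB Q} {Δ Δ' : Trans1 α σB Q}
    (hφ : IsSimulation φ Δ Δ') {w : Store1 α} {S T : Set (GQ σB Q)} (h : wrun Δ w S T) :
    ∀ S₂ ⊆ φ '' S, ∃ T₂ ⊆ φ '' T, wrun Δ' w S₂ T₂ := by
  induction h with
  | nil S => exact fun S₂ h₂ => ⟨S₂, h₂, .nil S₂⟩
  | @cons a w S S₁ T hs _ ih =>
    obtain ⟨f, hf, rfl⟩ := hs
    intro S₂ hS₂
    have hstep : ∀ y ∈ S₂, ∃ T' ⊆ φ '' ⋃ g ∈ S, f g, (y, a, T') ∈ Δ' := by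
      intro y hy
      obtain ⟨x, hx, rfl⟩ := hS₂ hy
      obtain ⟨T', hT', hmem⟩ := hφ _ _ _ (hf x hx)
      exact ⟨T', hT'.trans (Set.image_mono (Set.subset_biUnion_of_mem hx)), hmem⟩
    choose! F hF hFΔ using hstep
    obtain ⟨T₂, hT₂, hr⟩ := ih _ (Set.iUnion₂_subset hF)
    exact ⟨T₂, hT₂, .cons ⟨F, hFΔ, rfl⟩ hr⟩

def Elem.state : Elem α σB Q → GQ σB Q
  | .ref θ => θ
  | .push _ _ θ => θ

def Elem.Reads (b : α) : Elem α σB Q → List α → Prop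
  | .ref _, w => w = [b]
  | .push a v _, w => b = a ∧ w = v

lemma elemClause_iff {Δ : Trans1 α σB Q} {b : α} {e : Elem α σB Q} {U : Set (GQ σB Q)} :
    ElemClause Δ b e U ↔ ∃ w, e.Reads b w ∧ wrun Δ w {e.state} U := by
  cases e <;> simp [ElemClause, Elem.Reads, Elem.state, wrun_singleton_iff]

lemma Elem.state_substElem (j i : ℕ) (e : Elem α σB Q) :
    (substElem j i e).state = substGQ j i e.state := by
  cases e <;> rfl

lemma Elem.reads_substElem {j i : ℕ} {b : α} {e : Elem α σB Q} {w : List α} :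
    (substElem j i e).Reads b w ↔ e.Reads b w := by
  cases e <;> rfl

end Runs

section Structure

variable {α P Q σB : Type}

/-- The states of `G^k` are those of level at most `k + 1`. -/
def level : GQ σB Q → ℕ
  | .inl _ => 0
  | .inr (k, _) => k + 1

/-- The possible labels of order-2 transitions of `A_i`: initial states of automata in `B` and
the states `g^i_id`. -/
def IsLabel (i : ℕ) (x : GQ σB Q) : Prop :=
  (∃ s, x = .inl s) ∨ ∃ id, x = .inr (i, id)

lemma IsLabel.level_le {i : ℕ} {x : GQ σB Q} (h : IsLabel i x) : level x ≤ i + 1 := by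
  rcases h with ⟨s, rfl⟩ | ⟨id, rfl⟩ <;> simp [level]

lemma IsLabel.subst {i : ℕ} {x : GQ σB Q} (j : ℕ) (h : IsLabel i x) :
    IsLabel j (substGQ j i x) := by
  rcases h with ⟨s, rfl⟩ | ⟨id, rfl⟩
  · exact Or.inl ⟨s, rfl⟩
  · exact Or.inr ⟨id, by simp [substGQ]⟩

lemma isLabel_of_mem_Δ2At {su : Setup α P Q σB} {i : ℕ} {dom : Set (Ident Q)} {q : Q}
    {θ : GQ σB Q} {T : Set Q} (h : (q, θ, T) ∈ Δ2At su i dom) : IsLabel i θ := by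
  rcases h with ⟨q', s, T', -, he⟩ | ⟨id, -, he⟩
  · exact Or.inl ⟨s, (Prod.mk.inj (Prod.mk.inj he).2).1⟩
  · exact Or.inr ⟨id, (Prod.mk.inj (Prod.mk.inj he).2).1⟩

lemma IsLabel.of_lstep {su : Setup α P Q σB} {i : ℕ} {dom : Set (Ident Q)} {S S' : Set Q}
    {θs : Set (GQ σB Q)} (h : lstep (Δ2At su i dom) S θs S') {θ : GQ σB Q} (hθ : θ ∈ θs) :
    IsLabel i θ := by
  obtain ⟨f, hf, rfl, -⟩ := h
  obtain ⟨q, hq, rfl⟩ := hθ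
  exact isLabel_of_mem_Δ2At (hf q hq)

lemma Clause.isLabel {su : Setup α P Q σB} {i : ℕ} {st : Stage α σB Q} {a : α} {p : P}
    {op : Op2 α × P} {Qt : Set Q} {Selt : Set (Elem α σB Q)}
    (h : Clause su i st a p op Qt Selt) : ∀ e ∈ Selt, IsLabel i e.state := by
  obtain ⟨o, pk⟩ := op
  cases o with
  | push2 =>
    obtain ⟨θ1, θ2, Q', h1, h2, rfl⟩ := h
    rintro e (rfl | ⟨θ, hθ, rfl⟩ | ⟨θ, hθ, rfl⟩)
    · exact Or.inl ⟨_, rfl⟩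
    · exact IsLabel.of_lstep h1 hθ
    · exact IsLabel.of_lstep h2 hθ
  | pop2 =>
    obtain ⟨rfl, -⟩ := h
    rintro e rfl
    exact Or.inl ⟨_, rfl⟩
  | pushw w =>
    obtain ⟨θ, T, hθ, -, rfl⟩ := h
    rintro e rfl
    exact isLabel_of_mem_Δ2At hθ

lemma Clause.finite [Finite Q] {su : Setup α P Q σB} {i : ℕ} {st : Stage α σB Q} {a : α}
    {p : P} {op : Op2 α × P} {Qt : Set Q} {Selt : Set (Elem α σB Q)}
    (h : Clause su i st a p op Qt Selt) : Selt.Finite := by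
  obtain ⟨o, pk⟩ := op
  cases o with
  | push2 =>
    obtain ⟨θ1, θ2, Q', ⟨f1, -, rfl, -⟩, ⟨f2, -, rfl, -⟩, rfl⟩ := h
    exact ((((Set.toFinite _).image _).image _).union
      (((Set.toFinite _).image _).image _)).insert _
  | pop2 =>
    obtain ⟨rfl, -⟩ := h
    exact Set.finite_singleton _
  | pushw w =>
    obtain ⟨θ, T, -, -, rfl⟩ := h
    exact Set.finite_singleton _

lemma isLabel_of_mem_recipes {su : Setup α P Q σB} {i : ℕ} {id : Ident Q}
    {S : Set (Elem α σB Q)} (hS : S ∈ (stage su i).recipes id) {e : Elem α σB Q}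
    (he : e ∈ S) : IsLabel (i - 1) e.state := by
  cases i with
  | zero => exact absurd hS (Set.notMem_empty S)
  | succ i =>
    obtain ⟨p, a, OP, -, -, f, hcl, -, rfl⟩ := hS
    obtain ⟨op, hop, he⟩ := Set.mem_iUnion₂.1 he
    exact (hcl op hop).isLabel e he

lemma finite_of_mem_recipes [Finite Q] {su : Setup α P Q σB}
    (hOPfin : ∀ x ∈ su.D, x.2.2.Finite) {i : ℕ} {id : Ident Q} {S : Set (Elem α σB Q)}
    (hS : S ∈ (stage su i).recipes id) : S.Finite := by
  cases i with
  | zero => exact absurd hS (Set.notMem_empty S)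
  | succ i =>
    obtain ⟨p, a, OP, hD, -, f, hcl, -, rfl⟩ := hS
    exact (hOPfin _ hD).biUnion fun op hop => (hcl op hop).finite

lemma subset_TG {j : ℕ} {dom : Set (Ident Q)} {R : Ident Q → Set (Set (Elem α σB Q))}
    {Δ1 : Trans1 α σB Q} : Δ1 ⊆ TG j dom R Δ1 :=
  fun _ ht => Or.inl (Or.inl ht)

lemma mem_TG_of_inherit {j : ℕ} {dom : Set (Ident Q)} {R : Ident Q → Set (Set (Elem α σB Q))}
    {Δ1 : Trans1 α σB Q} {id : Ident Q} (hid : id ∈ dom) {a : α} {T : Set (GQ σB Q)}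
    (h : (.inr (j - 1, id), a, T) ∈ Δ1) : (.inr (j, id), a, T) ∈ TG j dom R Δ1 :=
  Or.inl (Or.inr ⟨id, hid, a, T, h, rfl⟩)

lemma mem_TG_of_recipe {j : ℕ} {dom : Set (Ident Q)} {R : Ident Q → Set (Set (Elem α σB Q))}
    {Δ1 : Trans1 α σB Q} {id : Ident Q} (hid : id ∈ dom) {b : α} {S : Set (Elem α σB Q)}
    (hS : S ∈ R id) {f : Elem α σB Q → Set (GQ σB Q)} (hf : ∀ e ∈ S, ElemClause Δ1 b e (f e)) :
    (.inr (j, id), b, ⋃ e ∈ S, f e) ∈ TG j dom R Δ1 :=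
  Or.inr ⟨id, hid, b, S, f, hS, hf, rfl⟩

lemma mem_TG {j : ℕ} {dom : Set (Ident Q)} {R : Ident Q → Set (Set (Elem α σB Q))}
    {Δ1 : Trans1 α σB Q} {g : GQ σB Q} {a : α} {T : Set (GQ σB Q)}
    (h : (g, a, T) ∈ TG j dom R Δ1) :
    (g, a, T) ∈ Δ1 ∨
    (∃ id ∈ dom, g = .inr (j, id) ∧ (.inr (j - 1, id), a, T) ∈ Δ1) ∨
    ∃ id ∈ dom, g = .inr (j, id) ∧ ∃ S ∈ R id, ∃ f : Elem α σB Q → Set (GQ σB Q),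
      (∀ e ∈ S, ElemClause Δ1 a e (f e)) ∧ T = ⋃ e ∈ S, f e := by
  rcases h with (h | ⟨id, hid, a', T', h', he⟩) | ⟨id, hid, b, S, f, hS, hf, he⟩
  · exact Or.inl h
  · simp only [Prod.mk.injEq] at he
    obtain ⟨rfl, rfl, rfl⟩ := he
    exact Or.inr (Or.inl ⟨id, hid, rfl, h'⟩)
  · simp only [Prod.mk.injEq] at he
    obtain ⟨rfl, rfl, rfl⟩ := he
    exact Or.inr (Or.inr ⟨id, hid, rfl, S, hS, f, hf, rfl⟩)

lemma stage_succ_Δ1 (su : Setup α P Q σB) (i : ℕ) :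
    (stage su (i + 1)).Δ1 =
      TG (i + 1) (stage su (i + 1)).gdom (stage su (i + 1)).recipes (stage su i).Δ1 :=
  rfl

lemma stage_Δ1_mono (su : Setup α P Q σB) : Monotone fun i => (stage su i).Δ1 :=
  monotone_nat_of_le_succ fun _ => subset_TG

lemma stage_gdom_mono (su : Setup α P Q σB) : Monotone fun i => (stage su i).gdom :=
  monotone_nat_of_le_succ fun _ => Set.subset_union_left

lemma level_eq_zero_of_mem_stage_zero {su : Setup α P Q σB} {g : GQ σB Q} {a : α}
    {T : Set (GQ σB Q)} (h : (g, a, T) ∈ (stage su 0).Δ1) :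
    level g = 0 ∧ ∀ x ∈ T, level x = 0 := by
  obtain ⟨s, a', T', -, he⟩ := h
  simp only [Prod.mk.injEq] at he
  obtain ⟨rfl, rfl, rfl⟩ := he
  exact ⟨rfl, by rintro x ⟨s', -, rfl⟩; rfl⟩

lemma mem_stage_inl {su : Setup α P Q σB} {i : ℕ} {s : σB} {a : α} {T : Set (GQ σB Q)}
    (h : (.inl s, a, T) ∈ (stage su i).Δ1) : (.inl s, a, T) ∈ (stage su 0).Δ1 := by
  induction i with
  | zero => exact h
  | succ i ih =>
    rw [stage_succ_Δ1] at h
    rcases mem_TG h with h | ⟨id, -, he, -⟩ | ⟨id, -, he, -⟩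
    · exact ih h
    · cases he
    · cases he

lemma level_le_of_elemClause {Δ : Trans1 α σB Q} {L : ℕ}
    (hΔ : ∀ g a T, (g, a, T) ∈ Δ → ∀ x ∈ T, level x ≤ L) {b : α} {e : Elem α σB Q}
    {U : Set (GQ σB Q)} (h : ElemClause Δ b e U) (he : level e.state ≤ L) :
    ∀ x ∈ U, level x ≤ L := by
  obtain ⟨w, -, hr⟩ := elemClause_iff.1 h
  exact (wrun_of_closed (W := {x | level x ≤ L}) (fun g a T h _ => ⟨h, hΔ g a T h⟩) hr
    (Set.singleton_subset_iff.2 he)).2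

lemma mem_stage_inr {su : Setup α P Q σB} {i k : ℕ} {id : Ident Q} {a : α}
    {T : Set (GQ σB Q)} (h : (.inr (k, id), a, T) ∈ (stage su i).Δ1) :
    k ≤ i ∧ id ∈ (stage su k).gdom ∧ (.inr (k, id), a, T) ∈ (stage su k).Δ1 ∧
      ∀ x ∈ T, level x ≤ k := by
  induction i generalizing k id a T with
  | zero => exact absurd (level_eq_zero_of_mem_stage_zero h).1 (by simp [level])
  | succ i ih =>
    have hbound : ∀ g a T, (g, a, T) ∈ (stage su i).Δ1 → ∀ x ∈ T, level x ≤ i + 1 := by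
      rintro (s | ⟨k', id'⟩) a T hg x hx
      · simp [(level_eq_zero_of_mem_stage_zero (mem_stage_inl hg)).2 x hx]
      · obtain ⟨hk', -, -, hT⟩ := ih hg
        exact (hT x hx).trans (by omega)
    have hmem := h
    rw [stage_succ_Δ1] at h
    rcases mem_TG h with h | ⟨id', hid, he, h'⟩ | ⟨id', hid, he, S, hS, f, hf, rfl⟩
    · obtain ⟨hk, hid, h, hT⟩ := ih h
      exact ⟨hk.trans i.le_succ, hid, h, hT⟩
    · cases he
      refine ⟨le_rfl, hid, hmem, fun x hx => ?_⟩
      have := (ih h').2.2.2 x hx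
      omega
    · cases he
      refine ⟨le_rfl, hid, hmem, ?_⟩
      simp only [Set.mem_iUnion]
      rintro x ⟨e, he, hx⟩
      exact level_le_of_elemClause hbound (hf e he)
        (by simpa using (isLabel_of_mem_recipes hS he).level_le) x hx

end Structure

section Levels

variable {α P Q σB : Type}

lemma level_le_of_mem_stage {su : Setup α P Q σB} {i : ℕ} {g : GQ σB Q} {a : α}
    {T : Set (GQ σB Q)} (h : (g, a, T) ∈ (stage su i).Δ1) :
    level g ≤ i + 1 ∧ ∀ x ∈ T, level x ≤ level g := by
  rcases g with s | ⟨k, id⟩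
  · exact ⟨Nat.zero_le _, fun x hx =>
      (level_eq_zero_of_mem_stage_zero (mem_stage_inl h)).2 x hx ▸ le_rfl⟩
  · obtain ⟨hk, -, -, hT⟩ := mem_stage_inr h
    exact ⟨by simp [level, hk], fun x hx => (hT x hx).trans k.le_succ⟩

lemma mem_stage_of_level_le {su : Setup α P Q σB} {i j : ℕ} {g : GQ σB Q} {a : α}
    {T : Set (GQ σB Q)} (h : (g, a, T) ∈ (stage su i).Δ1) (hg : level g ≤ j + 1) :
    (g, a, T) ∈ (stage su j).Δ1 := by
  rcases g with s | ⟨k, id⟩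
  · exact stage_Δ1_mono su (Nat.zero_le j) (mem_stage_inl h)
  · exact stage_Δ1_mono su (by simpa [level] using hg) (mem_stage_inr h).2.2.1

lemma mem_stage_lift {su : Setup α P Q σB} {i k j : ℕ} {id : Ident Q} {a : α}
    {T : Set (GQ σB Q)} (h : (.inr (k, id), a, T) ∈ (stage su i).Δ1) (hkj : k ≤ j) :
    (.inr (j, id), a, T) ∈ (stage su j).Δ1 := by
  obtain ⟨-, hid, hk, -⟩ := mem_stage_inr h
  induction j, hkj using Nat.le_induction with
  | base => exact hk
  | succ j hkj ih =>
    rw [stage_succ_Δ1]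
    exact mem_TG_of_inherit (stage_gdom_mono su (hkj.trans j.le_succ) hid) (by simpa using ih)

lemma acc1_stage_lift {su : Setup α P Q σB} {k j : ℕ} {id : Ident Q} {w : Store1 α}
    (h : Acc1 (stage su k).Δ1 (F1 su) (.inr (k, id)) w) (hkj : k ≤ j) :
    Acc1 (stage su j).Δ1 (F1 su) (.inr (j, id)) w := by
  obtain ⟨T, hr, hT⟩ := h
  cases w with
  | nil =>
    cases hr
    obtain ⟨s, -, hs⟩ := hT (Set.mem_singleton _)
    cases hs
  | cons a w =>
    obtain ⟨T₁, h₁, hr⟩ := wrun_cons_singleton_iff.1 hr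
    exact ⟨T, wrun_cons_singleton_iff.2
      ⟨T₁, mem_stage_lift h₁ hkj, wrun_mono (stage_Δ1_mono su hkj) hr⟩, hT⟩

def stageLimit (su : Setup α P Q σB) : Trans1 α σB Q :=
  ⋃ i, (stage su i).Δ1

lemma wrun_stage_of_wrun_stageLimit {su : Setup α P Q σB} {j : ℕ} {w : Store1 α}
    {S T : Set (GQ σB Q)} (h : wrun (stageLimit su) w S T) (hS : ∀ x ∈ S, level x ≤ j + 1) :
    wrun (stage su j).Δ1 w S T :=
  (wrun_of_closed (W := {x | level x ≤ j + 1}) (fun _ _ _ hg hlev =>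
    have ⟨_, hi⟩ := Set.mem_iUnion.1 hg
    ⟨mem_stage_of_level_le hi hlev, fun x hx => ((level_le_of_mem_stage hi).2 x hx).trans hlev⟩)
    h hS).1

lemma mem_hatSeq {su : Setup α P Q σB} {i1 m : ℕ} {g : GQ σB Q} {a : α}
    {T : Set (GQ σB Q)} (h : (g, a, T) ∈ hatSeq su i1 m) :
    (g, a, T) ∈ (stage su i1).Δ1 ∨ ∃ id, g = .inr (i1, id) := by
  induction m with
  | zero => exact Or.inl h
  | succ m ih =>
    rcases mem_TG h with h | ⟨id, -, rfl, -⟩ | ⟨id, -, rfl, -⟩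
    · exact ih h
    · exact Or.inr ⟨id, rfl⟩
    · exact Or.inr ⟨id, rfl⟩

lemma mem_stage_of_mem_hatSeq {su : Setup α P Q σB} {i1 m : ℕ} {g : GQ σB Q} {a : α}
    {T : Set (GQ σB Q)} (h : (g, a, T) ∈ hatSeq su i1 m) (hg : level g ≤ i1) :
    (g, a, T) ∈ (stage su i1).Δ1 ∧ ∀ x ∈ T, level x ≤ i1 := by
  rcases mem_hatSeq h with h | ⟨id, rfl⟩
  · exact ⟨h, fun x hx => ((level_le_of_mem_stage h).2 x hx).trans hg⟩
  · simp [level] at hg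

lemma level_le_of_mem_hatSeq {su : Setup α P Q σB} {i1 m : ℕ} {g : GQ σB Q} {a : α}
    {T : Set (GQ σB Q)} (h : (g, a, T) ∈ hatSeq su i1 m) :
    level g ≤ i1 + 1 ∧ ∀ x ∈ T, level x ≤ i1 + 1 := by
  induction m generalizing g a T with
  | zero =>
    obtain ⟨hg, hT⟩ := level_le_of_mem_stage h
    exact ⟨hg, fun x hx => (hT x hx).trans hg⟩
  | succ m ih =>
    rcases mem_TG h with h | ⟨id, -, rfl, h'⟩ | ⟨id, -, rfl, S, ⟨S₀, hS₀, rfl⟩, f, hf, rfl⟩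
    · exact ih h
    · exact ⟨le_rfl, (ih h').2⟩
    · refine ⟨le_rfl, ?_⟩
      simp only [Set.mem_iUnion]
      rintro x ⟨_, ⟨e₀, he₀, rfl⟩, hx⟩
      refine level_le_of_elemClause (fun g a T h => (ih h).2) (hf _ ⟨e₀, he₀, rfl⟩) ?_ x hx
      rw [Elem.state_substElem]
      exact ((isLabel_of_mem_recipes hS₀ he₀).subst i1).level_le

lemma hatSeq_mono (su : Setup α P Q σB) (i1 : ℕ) : Monotone (hatSeq su i1) :=
  monotone_nat_of_le_succ fun _ => subset_TG

lemma finite_setOf_level_le [Finite σB] [Finite Q] (c : ℕ) :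
    {x : GQ σB Q | level x ≤ c}.Finite := by
  refine ((Set.finite_univ.image Sum.inl).union
    (((Set.finite_Iic c).prod Set.finite_univ).image Sum.inr)).subset ?_
  rintro (s | ⟨k, id⟩) hx
  · exact Or.inl ⟨s, trivial, rfl⟩
  · exact Or.inr ⟨(k, id), ⟨by simp only [Set.mem_ofPred_eq, level] at hx; simp; omega, trivial⟩,
      rfl⟩

lemma hatSeq_stabilizes [Finite α] [Finite σB] [Finite Q] (su : Setup α P Q σB) (i1 : ℕ) :
    ∃ m0, ∀ m, hatSeq su i1 m ⊆ hatSeq su i1 m0 := by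
  have hfin : (⋃ m, hatSeq su i1 m).Finite := by
    refine ((finite_setOf_level_le (i1 + 1)).prod
      (Set.finite_univ.prod (finite_setOf_level_le (i1 + 1)).finite_subsets)).subset ?_
    refine Set.iUnion_subset fun m => ?_
    rintro ⟨g, a, T⟩ h
    exact ⟨(level_le_of_mem_hatSeq h).1, trivial, (level_le_of_mem_hatSeq h).2⟩
  have hev : ∀ t ∈ ⋃ m, hatSeq su i1 m, ∀ᶠ m in atTop, t ∈ hatSeq su i1 m := by
    intro t ht
    obtain ⟨m, hm⟩ := Set.mem_iUnion.1 ht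
    exact eventually_atTop.2 ⟨m, fun k hk => hatSeq_mono su i1 hk hm⟩
  obtain ⟨m0, hm0⟩ := ((eventually_all_finite hfin).2 hev).exists
  exact ⟨m0, fun m t ht => hm0 t (Set.mem_iUnion.2 ⟨m, ht⟩)⟩

end Levels

section Collapse

variable {α P Q σB : Type}

def collapse (i1 : ℕ) : GQ σB Q → GQ σB Q
  | .inl s => .inl s
  | .inr (k, id) => .inr (min k i1, id)

lemma collapse_of_level_le {i1 : ℕ} {x : GQ σB Q} (h : level x ≤ i1 + 1) :
    collapse i1 x = x := by
  rcases x with s | ⟨k, id⟩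
  · rfl
  · simp only [level] at h
    simp [collapse, Nat.min_eq_left (show k ≤ i1 by omega)]

lemma collapse_inr_of_le {i1 k : ℕ} {id : Ident Q} (h : i1 ≤ k) :
    collapse i1 (.inr (k, id) : GQ σB Q) = .inr (i1, id) := by
  simp [collapse, Nat.min_eq_right h]

lemma IsLabel.substGQ_substGQ {i1 m : ℕ} {x : GQ σB Q} (hx : IsLabel (i1 + m) x) :
    substGQ i1 (i1 - 1) (substGQ (i1 - 1) (i1 + m) x) = collapse i1 x := by
  rcases hx with ⟨s, rfl⟩ | ⟨id, rfl⟩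
  · rfl
  · simp [substGQ, collapse]

/-- By `G̃^{i1+m+1} ≲ G̃^{i1}`, a recipe of `g^{i1+m+1}_id` is, after collapsing, a recipe of
`ĝ_id`. -/
lemma IsSimulation.collapse_succ {su : Setup α P Q σB} {i1 : ℕ}
    (hfix : ∀ i, i1 ≤ i → SimeqAt su i1 i) {m : ℕ}
    (ih : IsSimulation (collapse i1) (stage su (i1 + m)).Δ1 (hatSeq su i1 m)) :
    IsSimulation (collapse i1) (stage su (i1 + m + 1)).Δ1 (hatSeq su i1 (m + 1)) := by
  intro g a T h
  rw [stage_succ_Δ1] at h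
  rcases mem_TG h with h | ⟨id, -, rfl, h'⟩ | ⟨id, hid, rfl, S, hS, f, hf, rfl⟩
  · obtain ⟨T', hT', h'⟩ := ih g a T h
    exact ⟨T', hT', subset_TG h'⟩
  · obtain ⟨T', hT', h''⟩ := ih _ _ _ (by simpa using h')
    rw [collapse_inr_of_le (by omega)] at h'' ⊢
    exact ⟨T', hT', subset_TG h''⟩
  · obtain ⟨hdom, hrec⟩ := hfix (i1 + m + 1) (by omega)
    have hS₀ : substS (i1 - 1) (i1 + m) S ∈ (stage su i1).recipes id := by
      simpa using (hrec id hid).1 S hS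
    have helem : ∀ e' ∈ substS i1 (i1 - 1) (substS (i1 - 1) (i1 + m) S),
        ∃ U ⊆ collapse i1 '' ⋃ e ∈ S, f e, ElemClause (hatSeq su i1 m) a e' U := by
      rintro _ ⟨_, ⟨e, he, rfl⟩, rfl⟩
      have hlab : IsLabel (i1 + m) e.state := by simpa using isLabel_of_mem_recipes hS he
      obtain ⟨w, hw, hr⟩ := elemClause_iff.1 (hf e he)
      obtain ⟨U, hU, hr'⟩ := ih.wrun hr {collapse i1 e.state} (by simp)
      refine ⟨U, hU.trans (Set.image_mono (Set.subset_biUnion_of_mem he)),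
        elemClause_iff.2 ⟨w, Elem.reads_substElem.2 (Elem.reads_substElem.2 hw), ?_⟩⟩
      rwa [Elem.state_substElem, Elem.state_substElem, hlab.substGQ_substGQ]
    choose! F hF hFc using helem
    rw [collapse_inr_of_le (by omega)]
    exact ⟨_, Set.iUnion₂_subset hF, mem_TG_of_recipe (hdom ▸ hid) (Set.mem_image_of_mem _ hS₀) hFc⟩

lemma isSimulation_collapse {su : Setup α P Q σB} {i1 : ℕ}
    (hfix : ∀ i, i1 ≤ i → SimeqAt su i1 i) (m : ℕ) :
    IsSimulation (collapse i1) (stage su (i1 + m)).Δ1 (hatSeq su i1 m) := by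
  induction m with
  | zero =>
    intro g a T h
    obtain ⟨hg, hT⟩ := level_le_of_mem_stage h
    refine ⟨T, fun x hx => ⟨x, hx, collapse_of_level_le ((hT x hx).trans hg)⟩, ?_⟩
    rw [collapse_of_level_le hg]
    exact h
  | succ m ih => exact ih.collapse_succ hfix

lemma exists_acc1_hatSeq_of_acc1_stage {su : Setup α P Q σB} {i1 : ℕ}
    (hfix : ∀ i, i1 ≤ i → SimeqAt su i1 i) {k : ℕ} {id : Ident Q} {w : Store1 α}
    (h : Acc1 (stage su k).Δ1 (F1 su) (.inr (k, id)) w) :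
    ∃ m, Acc1 (hatSeq su i1 m) (F1 su) (.inr (i1, id)) w := by
  obtain ⟨T, hr, hT⟩ := acc1_stage_lift h (Nat.le_add_left k i1)
  obtain ⟨T₂, hT₂, hr₂⟩ := (isSimulation_collapse hfix k).wrun hr {.inr (i1, id)}
    (by rw [Set.image_singleton, collapse_inr_of_le (Nat.le_add_right i1 k)])
  refine ⟨k, T₂, hr₂, fun x hx => ?_⟩
  obtain ⟨y, hy, rfl⟩ := hT₂ hx
  obtain ⟨s, -, rfl⟩ := hT hy
  exact hT hy

end Collapse

section Tracking

variable {α P Q σB : Type}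

/-- `g^k_id` only imitates `ĝ_id = g^{i1}_id` for large `k`, and each step of a run may lower
`k`; hence the depth `n`. -/
def Shadows (i1 n : ℕ) (x x' : GQ σB Q) : Prop :=
  (x = x' ∧ level x ≤ i1) ∨ ∃ k id, n ≤ k ∧ x = .inr (k, id) ∧ x' = .inr (i1, id)

def ShadowsSet (i1 n : ℕ) (S S' : Set (GQ σB Q)) : Prop :=
  ∀ x ∈ S, ∃ x' ∈ S', Shadows i1 n x x'

lemma ShadowsSet.mono_right {i1 n : ℕ} {S S' S'' : Set (GQ σB Q)} (h : ShadowsSet i1 n S S')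
    (hS' : S' ⊆ S'') : ShadowsSet i1 n S S'' :=
  fun x hx => let ⟨x', hx', hsh⟩ := h x hx; ⟨x', hS' hx', hsh⟩

lemma ShadowsSet.biUnion {ι : Type} {i1 n : ℕ} {I : Set ι} {F : ι → Set (GQ σB Q)}
    {S' : Set (GQ σB Q)} (h : ∀ i ∈ I, ShadowsSet i1 n (F i) S') :
    ShadowsSet i1 n (⋃ i ∈ I, F i) S' := by
  intro x hx
  obtain ⟨i, hi, hx⟩ := Set.mem_iUnion₂.1 hx
  exact h i hi x hx

lemma ShadowsSet.singleton {i1 n : ℕ} {x x' : GQ σB Q} (h : Shadows i1 n x x') :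
    ShadowsSet i1 n {x} {x'} := by
  rintro _ rfl
  exact ⟨x', rfl, h⟩

lemma shadowsSet_self {i1 n : ℕ} {S : Set (GQ σB Q)} (hS : ∀ x ∈ S, level x ≤ i1) :
    ShadowsSet i1 n S S :=
  fun x hx => ⟨x, hx, Or.inl ⟨rfl, hS x hx⟩⟩

lemma IsLabel.shadows_substGQ {i i1 n j : ℕ} {x : GQ σB Q} (hx : IsLabel i x) (hj : n ≤ j) :
    Shadows i1 n (substGQ j i x) (substGQ i1 i x) := by
  rcases hx with ⟨s, rfl⟩ | ⟨id, rfl⟩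
  · exact Or.inl ⟨rfl, Nat.zero_le _⟩
  · exact Or.inr ⟨j, id, hj, by simp [substGQ], by simp [substGQ]⟩

def StepTracked (su : Setup α P Q σB) (i1 : ℕ) (Δ : Trans1 α σB Q) : Prop :=
  ∀ id a T', (.inr (i1, id), a, T') ∈ Δ → ∀ n, ∀ᶠ k in atTop,
    ∃ T, (.inr (k, id), a, T) ∈ stageLimit su ∧ ShadowsSet i1 n T T'

def RunTracked (su : Setup α P Q σB) (i1 : ℕ) (Δ : Trans1 α σB Q) : Prop :=
  ∀ w S' T', wrun Δ w S' T' → ∀ n, ∃ N, ∀ S, ShadowsSet i1 N S S' →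
    ∃ T, wrun (stageLimit su) w S T ∧ ShadowsSet i1 n T T'

lemma StepTracked.runTracked [Finite Q] {su : Setup α P Q σB} {i1 m : ℕ}
    (hA : StepTracked su i1 (hatSeq su i1 m)) : RunTracked su i1 (hatSeq su i1 m) := by
  intro w S' T' hr
  induction hr with
  | nil S' => exact fun n => ⟨n, fun S hS => ⟨S, .nil S, hS⟩⟩
  | @cons a w S' S₁' T' hs _ ih =>
    intro n
    obtain ⟨f, hf, rfl⟩ := hs
    obtain ⟨N₁, hN₁⟩ := ih n
    have hhat : ∀ᶠ k in atTop, ∀ id, .inr (i1, id) ∈ S' →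
        ∃ T, (.inr (k, id), a, T) ∈ stageLimit su ∧ ShadowsSet i1 N₁ T (⋃ g ∈ S', f g) := by
      refine eventually_all.2 fun id => ?_
      by_cases hid : .inr (i1, id) ∈ S'
      · filter_upwards [hA id a _ (hf _ hid) N₁] with k ⟨T, hT, hsh⟩ _
        exact ⟨T, hT, hsh.mono_right (Set.subset_biUnion_of_mem hid)⟩
      · exact Eventually.of_forall fun _ h => absurd h hid
    obtain ⟨K, hK⟩ := eventually_atTop.1 hhat
    refine ⟨max K N₁, fun S hS => ?_⟩
    have hstep : ∀ x ∈ S, ∃ U, (x, a, U) ∈ stageLimit su ∧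
        ShadowsSet i1 N₁ U (⋃ g ∈ S', f g) := by
      intro x hx
      obtain ⟨x', hx', ⟨rfl, hlow⟩ | ⟨k, id, hk, rfl, rfl⟩⟩ := hS x hx
      · obtain ⟨h₁, h₂⟩ := mem_stage_of_mem_hatSeq (hf x hx') hlow
        exact ⟨f x, Set.mem_iUnion.2 ⟨i1, h₁⟩,
          (shadowsSet_self h₂).mono_right (Set.subset_biUnion_of_mem hx')⟩
      · exact hK k (le_of_max_le_left hk) id hx'
    choose! F hF hFsh using hstep
    obtain ⟨T, hT, hsh⟩ := hN₁ _ (ShadowsSet.biUnion hFsh)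
    exact ⟨T, .cons ⟨F, hF, rfl⟩ hT, hsh⟩

lemma RunTracked.stepTracked {su : Setup α P Q σB} {i1 : ℕ} {Δ : Trans1 α σB Q}
    (hB : RunTracked su i1 Δ) : StepTracked su i1 Δ := by
  intro id a T' h n
  obtain ⟨N, hN⟩ := hB [a] _ _ (wrun_singleton_iff.2 h) n
  filter_upwards [eventually_ge_atTop N] with k hk
  obtain ⟨T, hT, hsh⟩ := hN {.inr (k, id)} (.singleton (Or.inr ⟨k, id, hk, rfl, rfl⟩))
  exact ⟨T, wrun_singleton_iff.1 hT, hsh⟩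

lemma stepTracked_hatSeq_zero (su : Setup α P Q σB) (i1 : ℕ) :
    StepTracked su i1 (hatSeq su i1 0) := by
  intro id a T' h n
  filter_upwards [eventually_ge_atTop i1] with k hk
  exact ⟨T', Set.mem_iUnion.2 ⟨k, mem_stage_lift h hk⟩, shadowsSet_self (mem_stage_inr h).2.2.2⟩

lemma RunTracked.eventually_elemClause {su : Setup α P Q σB} {i1 m : ℕ}
    (hB : RunTracked su i1 (hatSeq su i1 m)) {e₀ : Elem α σB Q}
    (hlab : IsLabel (i1 - 1) e₀.state) {a : α} {U' : Set (GQ σB Q)}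
    (h : ElemClause (hatSeq su i1 m) a (substElem i1 (i1 - 1) e₀) U') (n : ℕ) :
    ∀ᶠ j in atTop, ∃ U, ElemClause (stage su j).Δ1 a (substElem j (i1 - 1) e₀) U ∧
      ShadowsSet i1 n U U' := by
  obtain ⟨w, hw, hr⟩ := elemClause_iff.1 h
  rw [Elem.state_substElem] at hr
  obtain ⟨N, hN⟩ := hB w _ _ hr n
  filter_upwards [eventually_ge_atTop N] with j hj
  obtain ⟨U, hU, hsh⟩ := hN _ (.singleton (hlab.shadows_substGQ hj))
  have hU' := wrun_stage_of_wrun_stageLimit hU (by simpa using (hlab.subst j).level_le)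
  exact ⟨U, elemClause_iff.2 ⟨w, Elem.reads_substElem.2 (Elem.reads_substElem.1 hw),
    by rwa [Elem.state_substElem]⟩, hsh⟩

/-- By `G̃^{i1} ≲ G̃^{j+1}`, the recipe `S₀` of `ĝ_id` reappears as `S₀[j/i1-1]` among the
recipes of `g^{j+1}_id`. -/
lemma RunTracked.eventually_of_recipe [Finite Q] {su : Setup α P Q σB} {i1 m : ℕ}
    (hfix : ∀ i, i1 ≤ i → SimeqAt su i1 i) (hOPfin : ∀ x ∈ su.D, x.2.2.Finite)
    (hB : RunTracked su i1 (hatSeq su i1 m)) {id : Ident Q} (hid : id ∈ (stage su i1).gdom)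
    {S₀ : Set (Elem α σB Q)} (hS₀ : S₀ ∈ (stage su i1).recipes id) {a : α}
    {f : Elem α σB Q → Set (GQ σB Q)}
    (hf : ∀ e ∈ substS i1 (i1 - 1) S₀, ElemClause (hatSeq su i1 m) a e (f e)) (n : ℕ) :
    ∀ᶠ k in atTop, ∃ T, (.inr (k, id), a, T) ∈ stageLimit su ∧
      ShadowsSet i1 n T (⋃ e ∈ substS i1 (i1 - 1) S₀, f e) := by
  have helem : ∀ e₀ ∈ S₀, ∀ᶠ j in atTop, ∃ U,
      ElemClause (stage su j).Δ1 a (substElem j (i1 - 1) e₀) U ∧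
        ShadowsSet i1 n U (⋃ e ∈ substS i1 (i1 - 1) S₀, f e) := by
    intro e₀ he₀
    have hmem : substElem i1 (i1 - 1) e₀ ∈ substS i1 (i1 - 1) S₀ := Set.mem_image_of_mem _ he₀
    filter_upwards [hB.eventually_elemClause (isLabel_of_mem_recipes hS₀ he₀) (hf _ hmem) n]
      with j ⟨U, hU, hsh⟩
    exact ⟨U, hU, hsh.mono_right (Set.subset_biUnion_of_mem hmem)⟩
  obtain ⟨J, hJ⟩ := eventually_atTop.1
    ((eventually_all_finite (finite_of_mem_recipes hOPfin hS₀)).2 helem)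
  refine eventually_atTop.2 ⟨max J i1 + 1, fun k hk => ?_⟩
  obtain ⟨j, rfl⟩ : ∃ j, k = j + 1 := ⟨k - 1, by omega⟩
  obtain ⟨hdom, hrec⟩ := hfix (j + 1) (by omega)
  have hid' : id ∈ (stage su (j + 1)).gdom := hdom ▸ hid
  have hS : substS j (i1 - 1) S₀ ∈ (stage su (j + 1)).recipes id := by
    simpa using (hrec id hid').2 S₀ hS₀
  have helem' : ∀ e ∈ substS j (i1 - 1) S₀, ∃ U, ElemClause (stage su j).Δ1 a e U ∧
      ShadowsSet i1 n U (⋃ e ∈ substS i1 (i1 - 1) S₀, f e) := by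
    rintro _ ⟨e₀, he₀, rfl⟩
    exact hJ j (by omega) e₀ he₀
  choose! F hF hFsh using helem'
  refine ⟨_, Set.mem_iUnion.2 ⟨j + 1, ?_⟩, ShadowsSet.biUnion hFsh⟩
  rw [stage_succ_Δ1]
  exact mem_TG_of_recipe hid' hS hF

lemma RunTracked.stepTracked_succ [Finite Q] {su : Setup α P Q σB} {i1 m : ℕ}
    (hfix : ∀ i, i1 ≤ i → SimeqAt su i1 i) (hOPfin : ∀ x ∈ su.D, x.2.2.Finite)
    (hB : RunTracked su i1 (hatSeq su i1 m)) : StepTracked su i1 (hatSeq su i1 (m + 1)) := by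
  intro id a T' h n
  rcases mem_TG h with h | ⟨id', hid, he, h'⟩ | ⟨id', hid, he, S, ⟨S₀, hS₀, rfl⟩, f, hf, rfl⟩
  · exact hB.stepTracked id a T' h n
  · cases he
    have hi1 : i1 ≠ 0 := by
      rintro rfl
      exact hid
    have h₀ : (.inr (i1 - 1, id), a, T') ∈ (stage su i1).Δ1 := by
      refine (mem_hatSeq h').resolve_right ?_
      rintro ⟨_, he⟩
      simp only [Sum.inr.injEq, Prod.mk.injEq] at he
      omega
    filter_upwards [eventually_ge_atTop i1] with k hk
    refine ⟨T', Set.mem_iUnion.2 ⟨k, mem_stage_lift h₀ (by omega)⟩, shadowsSet_self ?_⟩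
    exact fun x hx => ((mem_stage_inr h₀).2.2.2 x hx).trans (by omega)
  · cases he
    exact hB.eventually_of_recipe hfix hOPfin hid hS₀ hf n

lemma runTracked_hatSeq [Finite Q] {su : Setup α P Q σB} {i1 : ℕ}
    (hfix : ∀ i, i1 ≤ i → SimeqAt su i1 i) (hOPfin : ∀ x ∈ su.D, x.2.2.Finite) (m : ℕ) :
    RunTracked su i1 (hatSeq su i1 m) := by
  induction m with
  | zero => exact (stepTracked_hatSeq_zero su i1).runTracked
  | succ m ih => exact (ih.stepTracked_succ hfix hOPfin).runTracked

lemma exists_acc1_stage_of_acc1_hatSeq [Finite Q] {su : Setup α P Q σB} {i1 : ℕ}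
    (hfix : ∀ i, i1 ≤ i → SimeqAt su i1 i) (hOPfin : ∀ x ∈ su.D, x.2.2.Finite) {m : ℕ}
    {id : Ident Q} {w : Store1 α} (h : Acc1 (hatSeq su i1 m) (F1 su) (.inr (i1, id)) w) :
    ∃ k, Acc1 (stage su k).Δ1 (F1 su) (.inr (k, id)) w := by
  obtain ⟨T', hr, hT'⟩ := h
  obtain ⟨N, hN⟩ := runTracked_hatSeq hfix hOPfin m w _ _ hr 0
  obtain ⟨T, hT, hsh⟩ := hN {.inr (N, id)} (.singleton (Or.inr ⟨N, id, le_rfl, rfl, rfl⟩))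
  refine ⟨N, T, wrun_stage_of_wrun_stageLimit hT (by simp [level]), fun x hx => ?_⟩
  obtain ⟨x', hx', ⟨rfl, -⟩ | ⟨k, id', -, -, rfl⟩⟩ := hsh x hx
  · exact hT' hx'
  · obtain ⟨s, -, hs⟩ := hT' hx'
    cases hs

end Tracking

theorem order1_collapse_general
    (α P Q σB : Type) [Finite α] [Finite Q] [Finite σB]
    (su : Setup α P Q σB)
    (hOPfin : ∀ x ∈ su.D, x.2.2.Finite)
    (i1 : ℕ) (hfix : ∀ i, i1 ≤ i → SimeqAt su i1 i) :
    ∃ m0 : ℕ, ∀ (id : Ident Q) (w : Store1 α),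
      ((∃ m, Acc1 (hatSeq su i1 m) (F1 su) (Sum.inr (i1, id)) w) ↔
        Acc1 (hatSeq su i1 m0) (F1 su) (Sum.inr (i1, id)) w) ∧
      ((∃ i', Acc1 ((stage su i').Δ1) (F1 su) (Sum.inr (i', id)) w) ↔
        Acc1 (hatSeq su i1 m0) (F1 su) (Sum.inr (i1, id)) w) := by
  obtain ⟨m0, hm0⟩ := hatSeq_stabilizes su i1
  have h12 : ∀ id w, (∃ m, Acc1 (hatSeq su i1 m) (F1 su) (.inr (i1, id)) w) ↔
      Acc1 (hatSeq su i1 m0) (F1 su) (.inr (i1, id)) w :=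
    fun _ _ => ⟨fun ⟨m, h⟩ => h.mono (hm0 m), fun h => ⟨m0, h⟩⟩
  refine ⟨m0, fun id w => ⟨h12 id w, ?_⟩⟩
  rw [← h12]
  exact ⟨fun ⟨_, h⟩ => exists_acc1_hatSeq_of_acc1_stage hfix h,
    fun ⟨_, h⟩ => exists_acc1_stage_of_acc1_hatSeq hfix hOPfin h⟩

/-- Collapse at order 1.  Fix an order-2 APDS and a well-formed 2-store
multi-automaton `A_0`, with the saturation sequence and its order-1 automata
`G^0, G^1, …` and identifier sets `G̃^0, G̃^1, …`.  Suppose `G̃^i ≃ G̃^{i₁}` for all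
`i ≥ i₁`, and define the fixed-state sequence `Ĝ^{i₁} = G^{i₁}`,
`Ĝ^{i+1} = T_{G̃^{i₁}[i₁/i₁-1]}(Ĝ^i)` (indexed below by the offset from `i₁`).  Then
there exists `i₀` (= `i₁ + m₀`) such that, for every identifier `(q, Q')` and word `w`,
the following are equivalent:
(1) an accepting run `g^{i₁}_{(q,Q')} —w→ Q₁ ⊆ Q_f` exists in `Ĝ^i` for some `i`;
(2) an accepting run `g^{i₁}_{(q,Q')} —w→ Q₂ ⊆ Q_f` exists in `Ĝ^{i₀}`;
(3) an accepting run `g^{i'}_{(q,Q')} —w→ Q₃ ⊆ Q_f` exists in `G^{i'}` for some `i'`. -/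
theorem order1_collapse
    (α P Q σB : Type) [Finite α] [Finite P] [Finite Q] [Finite σB]
    (su : Setup α P Q σB) (hwf : su.WF)
    (hDfin : su.D.Finite) (hOPfin : ∀ x ∈ su.D, x.2.2.Finite)
    (i1 : ℕ) (hfix : ∀ i, i1 ≤ i → SimeqAt su i1 i) :
    ∃ m0 : ℕ, ∀ (id : Ident Q) (w : Store1 α),
      ((∃ m, Acc1 (hatSeq su i1 m) (F1 su) (Sum.inr (i1, id)) w) ↔
        Acc1 (hatSeq su i1 m0) (F1 su) (Sum.inr (i1, id)) w) ∧
      ((∃ i', Acc1 ((stage su i').Δ1) (F1 su) (Sum.inr (i', id)) w) ↔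
        Acc1 (hatSeq su i1 m0) (F1 su) (Sum.inr (i1, id)) w) :=
  order1_collapse_general α P Q σB su hOPfin i1 hfix

end Order2
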